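/- The function V : ℝ² → ℝ defined by V(x) = 1 − 1/(2 + log(1 + ‖x‖²)) satisfies: (i) ½ ≤ V(x) < 1 for all x ∈ ℝ² and V(x) → 1 as ‖x‖ → ∞; (ii) there exists η > 0 such that |⟨∇V(x), x⟩| ≤ η for all x ∈ ℝ²; (iii) for every x ∈ ℝ², the function t ↦ V(tx) − ½⟨∇V(tx), tx⟩ is nondecreasing on (0, ∞); (iv) V(x) + ½⟨∇V(x), x⟩ ≤ 1 for all x ∈ ℝ². -/

import Mathlib

open Filter
open scoped InnerProductSpace

abbrev E2 := EuclideanSpace ℝ (Fin 2)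

/-- The second example potential of the paper: `V(x) = 1 − 1/(2 + log(1 + ‖x‖²))`. -/
noncomputable def Vex2 (x : E2) : ℝ := 1 - 1 / (2 + Real.log (1 + ‖x‖ ^ 2))

/-!
`V` is radial: `V x = φ (‖x‖ ^ 2)` with `φ s = 1 - 1 / (2 + log (1 + s))`, so that
`⟪∇V x, x⟫ = 2 s φ' s` for `s = ‖x‖ ^ 2`, where `φ' s = ((1 + s) (2 + log (1 + s)) ^ 2)⁻¹`.
The bounds (i), (ii), (iv) all come from `2 + log (1 + s) ≥ 2`. Along the ray `t ↦ t • x`,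
the function in (iii) is `φ s - s φ' s` at `s = t ^ 2 ‖x‖ ^ 2`, and this is nondecreasing
in `s ≥ 0` because `φ'` is decreasing, i.e. `φ` is concave.
-/

open Real Set

section RadialFunctions

variable {F : Type*} [NormedAddCommGroup F] [InnerProductSpace ℝ F] [CompleteSpace F]
  {f : ℝ → ℝ} {f' : ℝ} {x : F}

theorem HasDerivAt.hasGradientAt_comp_norm_sq (hf : HasDerivAt f f' (‖x‖ ^ 2)) :
    HasGradientAt (fun y : F => f (‖y‖ ^ 2)) ((2 * f') • x) x := by
  rw [hasGradientAt_iff_hasFDerivAt]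
  refine (hf.comp_hasFDerivAt x (hasStrictFDerivAt_norm_sq x).hasFDerivAt).congr_fderiv ?_
  ext y
  simp only [smul_apply, coe_innerSL_apply, nsmul_eq_mul, Nat.cast_ofNat,
    smul_eq_mul, map_smul, InnerProductSpace.toDual_apply_apply]
  ring

theorem HasDerivAt.inner_gradient_comp_norm_sq_self (hf : HasDerivAt f f' (‖x‖ ^ 2)) :
    ⟪gradient (fun y : F => f (‖y‖ ^ 2)) x, x⟫_ℝ = 2 * ‖x‖ ^ 2 * f' := by
  rw [hf.hasGradientAt_comp_norm_sq.gradient, real_inner_smul_left,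
    real_inner_self_eq_norm_sq]
  ring

end RadialFunctions

theorem monotoneOn_sub_mul_deriv_of_antitoneOn {f f' : ℝ → ℝ}
    (hf : ∀ s ∈ Ici (0 : ℝ), HasDerivAt f (f' s) s) (hf' : AntitoneOn f' (Ici 0)) :
    MonotoneOn (fun s => f s - s * f' s) (Ici 0) := by
  intro a ha b hb hab
  rcases hab.eq_or_lt with rfl | hlt
  · rfl
  obtain ⟨c, hc, hslope⟩ := exists_hasDerivAt_eq_slope f f' hlt
    (fun s hs => (hf s (mem_Ici.2 (ha.trans hs.1))).continuousAt.continuousWithinAt)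
    (fun s hs => hf s (mem_Ici.2 (ha.trans hs.1.le)))
  have hmvt : f' b * (b - a) ≤ f b - f a := by
    rw [eq_div_iff (sub_ne_zero.2 hlt.ne')] at hslope
    rw [← hslope]
    exact mul_le_mul_of_nonneg_right (hf' (mem_Ici.2 (ha.trans hc.1.le)) hb hc.2.le)
      (sub_nonneg.2 hab)
  have hanti : a * f' b ≤ a * f' a := mul_le_mul_of_nonneg_left (hf' ha hb hab) ha
  -- the increment is at least `f' b (b - a) - b f' b + a f' a = a (f' a - f' b)`
  show f a - a * f' a ≤ f b - b * f' b
  nlinarith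

namespace Vex2

noncomputable def profile (s : ℝ) : ℝ := 1 - 1 / (2 + log (1 + s))

noncomputable def profileDeriv (s : ℝ) : ℝ := ((1 + s) * (2 + log (1 + s)) ^ 2)⁻¹

variable {s : ℝ}

theorem two_le_two_add_log (hs : 0 ≤ s) : 2 ≤ 2 + log (1 + s) := by
  have := log_nonneg (by linarith : (1 : ℝ) ≤ 1 + s)
  linarith

theorem half_le_profile (hs : 0 ≤ s) : 1 / 2 ≤ profile s := by
  have := one_div_le_one_div_of_le two_pos (two_le_two_add_log hs)
  unfold profile
  linarith

theorem profile_lt_one (hs : 0 ≤ s) : profile s < 1 := by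
  have := one_div_pos.2 (two_pos.trans_le (two_le_two_add_log hs))
  unfold profile
  linarith

theorem tendsto_profile_atTop : Tendsto profile atTop (nhds 1) := by
  have hL : Tendsto (fun s => 2 + log (1 + s)) atTop atTop :=
    tendsto_atTop_add_const_left _ _
      (tendsto_log_atTop.comp (tendsto_atTop_add_const_left _ _ tendsto_id))
  unfold profile
  simpa [one_div] using (tendsto_const_nhds (x := (1 : ℝ))).sub (tendsto_inv_atTop_zero.comp hL)

theorem hasDerivAt_profile (hs : 0 ≤ s) : HasDerivAt profile (profileDeriv s) s := by
  have h1 : 0 < 1 + s := by linarith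
  have hL : 2 + log (1 + s) ≠ 0 := (two_pos.trans_le (two_le_two_add_log hs)).ne'
  have hlog : HasDerivAt (fun s => 2 + log (1 + s)) (1 + s)⁻¹ s := by
    simpa using (((hasDerivAt_id s).const_add 1).log h1.ne').const_add 2
  unfold profile
  simp only [one_div]
  refine ((hlog.inv hL).const_sub 1).congr_deriv ?_
  simp only [profileDeriv]
  field_simp

theorem antitoneOn_profileDeriv : AntitoneOn profileDeriv (Ici 0) := by
  intro a (ha : 0 ≤ a) b _ hab
  have := two_le_two_add_log ha
  unfold profileDeriv
  gcongr
  linarith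

theorem mul_profileDeriv_le (hs : 0 ≤ s) : s * profileDeriv s ≤ 1 / (2 + log (1 + s)) := by
  have hL := two_le_two_add_log hs
  rw [profileDeriv, ← div_eq_mul_inv, div_le_div_iff₀ (by positivity) (by positivity)]
  have : 0 ≤ (2 + log (1 + s)) * (2 + log (1 + s) + s * (1 + log (1 + s))) := by
    have := log_nonneg (by linarith : (1 : ℝ) ≤ 1 + s)
    positivity
  nlinarith

theorem eq_profile (x : E2) : Vex2 x = profile (‖x‖ ^ 2) := rfl

theorem inner_gradient_self (x : E2) :
    ⟪gradient Vex2 x, x⟫_ℝ = 2 * ‖x‖ ^ 2 * profileDeriv (‖x‖ ^ 2) :=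
  (hasDerivAt_profile (sq_nonneg ‖x‖)).inner_gradient_comp_norm_sq_self

theorem abs_inner_gradient_self_le_one (x : E2) : |⟪gradient Vex2 x, x⟫_ℝ| ≤ 1 := by
  have hs := sq_nonneg ‖x‖
  have hle := mul_profileDeriv_le hs
  have hL := one_div_le_one_div_of_le two_pos (two_le_two_add_log hs)
  have hnonneg : 0 ≤ profileDeriv (‖x‖ ^ 2) := by unfold profileDeriv; positivity
  rw [inner_gradient_self, abs_of_nonneg (by positivity)]
  linarith

theorem add_half_inner_gradient_self_le_one (x : E2) :
    Vex2 x + 1 / 2 * ⟪gradient Vex2 x, x⟫_ℝ ≤ 1 := by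
  have := mul_profileDeriv_le (sq_nonneg ‖x‖)
  rw [inner_gradient_self, eq_profile, profile]
  linarith

theorem monotoneOn_sub_half_inner_gradient_smul (x : E2) :
    MonotoneOn (fun t : ℝ => Vex2 (t • x) - 1 / 2 * ⟪gradient Vex2 (t • x), t • x⟫_ℝ)
      (Ioi 0) := by
  have hnorm : MonotoneOn (fun t : ℝ => ‖t • x‖ ^ 2) (Ioi 0) :=
    fun a (ha : 0 < a) b (hb : 0 < b) hab => by
      simp only [norm_smul, norm_of_nonneg ha.le, norm_of_nonneg hb.le]
      gcongr
  refine ((monotoneOn_sub_mul_deriv_of_antitoneOn (fun s hs => hasDerivAt_profile hs)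
    antitoneOn_profileDeriv).comp hnorm fun t _ => sq_nonneg ‖t • x‖).congr fun t _ => ?_
  simp only [Function.comp, inner_gradient_self, eq_profile]
  ring

end Vex2

open Vex2 in
/-- `V(x) = 1 − 1/(2 + log(1 + ‖x‖²))` satisfies conditions (V₀) and (V₁)–(V₃)
with `V_∞ = 1`. -/
theorem stmt16 :
    (∀ x : E2, 1 / 2 ≤ Vex2 x ∧ Vex2 x < 1) ∧
      Tendsto Vex2 (cocompact E2) (nhds 1) ∧
      (∃ η > (0 : ℝ), ∀ x : E2, |⟪gradient Vex2 x, x⟫_ℝ| ≤ η) ∧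
      (∀ x : E2, MonotoneOn
        (fun t : ℝ => Vex2 (t • x) - (1 / 2) * ⟪gradient Vex2 (t • x), t • x⟫_ℝ)
        (Set.Ioi 0)) ∧
      (∀ x : E2, Vex2 x + (1 / 2) * ⟪gradient Vex2 x, x⟫_ℝ ≤ 1) :=
  ⟨fun _ => ⟨half_le_profile (sq_nonneg _), profile_lt_one (sq_nonneg _)⟩,
    tendsto_profile_atTop.comp ((tendsto_pow_atTop two_ne_zero).comp tendsto_norm_cocompact_atTop),
    ⟨1, one_pos, abs_inner_gradient_self_le_one⟩,
    monotoneOn_sub_half_inner_gradient_smul,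
    add_half_inner_gradient_self_le_one⟩
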